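/- (Eigenvalues of the counterexample iteration matrix) For every 0 < r < 1, the numbers λ₁(r) = (1 − 1/r) − √(1/r² − 1/r) and λ₂(r) = (1 − 1/r) + √(1/r² − 1/r) are eigenvalues of P(r), i.e., det(P(r) − λ₁(r)·I₂) = 0 and det(P(r) − λ₂(r)·I₂) = 0. In particular, λ₁(3/4) = −1 and λ₂(3/4) = 1/3. -/

import Mathlib

open Matrix

/-- The iteration matrix of CP-PPA with `s = 1` applied to `min{0·x : x = 0, x ∈ ℝ}`. -/
noncomputable def Pmat (r : ℝ) : Matrix (Fin 2) (Fin 2) ℝ :=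
  !![1, 1 / r; -1, 1 - 2 / r]

noncomputable def lam1 (r : ℝ) : ℝ := (1 - 1 / r) - Real.sqrt (1 / r ^ 2 - 1 / r)

noncomputable def lam2 (r : ℝ) : ℝ := (1 - 1 / r) + Real.sqrt (1 / r ^ 2 - 1 / r)

/- The characteristic polynomial of `P(r)` is `μ² - 2tμ + t` with `t = 1 - 1/r`, whose reduced
discriminant `t² - t` equals `1/r² - 1/r = (1 - r)/r²`; so `λ₁, λ₂ = t ∓ √(t² - t)` are its roots
as soon as `r ≤ 1`. -/

theorem det_Pmat_sub_smul_one (r μ : ℝ) :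
    (Pmat r - μ • (1 : Matrix (Fin 2) (Fin 2) ℝ)).det
      = (μ - (1 - 1 / r)) ^ 2 - (1 / r ^ 2 - 1 / r) := by
  rw [Pmat, det_fin_two]
  simp only [Matrix.sub_apply, Matrix.smul_apply, one_apply_eq, one_apply_ne zero_ne_one,
    one_apply_ne one_ne_zero, of_apply, cons_val', cons_val_zero, cons_val_one, cons_val_fin_one,
    smul_eq_mul]
  ring

theorem one_div_sq_sub_one_div_nonneg {r : ℝ} (hr : r ≤ 1) : 0 ≤ 1 / r ^ 2 - 1 / r := by
  rw [show 1 / r ^ 2 - 1 / r = (1 - r) / r ^ 2 by field_simp]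
  exact div_nonneg (by linarith) (sq_nonneg r)

theorem det_Pmat_sub_smul_one_eq_zero {r μ : ℝ} (hr : r ≤ 1)
    (hμ : μ = 1 - 1 / r - √(1 / r ^ 2 - 1 / r) ∨ μ = 1 - 1 / r + √(1 / r ^ 2 - 1 / r)) :
    (Pmat r - μ • (1 : Matrix (Fin 2) (Fin 2) ℝ)).det = 0 := by
  have hsq := Real.sq_sqrt (one_div_sq_sub_one_div_nonneg hr)
  rw [det_Pmat_sub_smul_one]
  rcases hμ with rfl | rfl <;> linear_combination hsq

theorem sqrt_discr_three_quarters : √(1 / (3 / 4 : ℝ) ^ 2 - 1 / (3 / 4)) = 2 / 3 := by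
  rw [Real.sqrt_eq_iff_mul_self_eq_of_pos (by norm_num)]
  norm_num

/-- `λ₁(r)` and `λ₂(r)` are eigenvalues of `P(r)` for `0 < r < 1`; moreover
`λ₁(3/4) = −1` and `λ₂(3/4) = 1/3`. -/
theorem stmt_16 :
    (∀ r : ℝ, 0 < r → r < 1 →
      (Pmat r - lam1 r • (1 : Matrix (Fin 2) (Fin 2) ℝ)).det = 0 ∧
      (Pmat r - lam2 r • (1 : Matrix (Fin 2) (Fin 2) ℝ)).det = 0) ∧
    lam1 (3 / 4) = -1 ∧ lam2 (3 / 4) = 1 / 3 := by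
  refine ⟨fun r _ hr1 => ⟨?_, ?_⟩, ?_, ?_⟩
  · exact det_Pmat_sub_smul_one_eq_zero hr1.le (Or.inl rfl)
  · exact det_Pmat_sub_smul_one_eq_zero hr1.le (Or.inr rfl)
  · rw [lam1, sqrt_discr_three_quarters]; norm_num
  · rw [lam2, sqrt_discr_three_quarters]; norm_num
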